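/- Given five points W₁,…,W₅, all on distinct sides or the same side of a segment UV, with all ten segments UWᵢ, VWᵢ pairwise non-crossing (a planar straight-line drawing of the 2-tree obtained by adding five simplicial vertices to edge UV), at least three of the five triangles UVWᵢ lie on the same side of the line UV, and among any three non-crossing triangles sharing edge UV on the same side of line UV, one contains the other two in its closed region. -/

import Mathlib

/-!
By pigeonhole, three of the five signs of `triDet U V (W i)` agree. For two triangles `UVA`,
`UVB` on the same side of `UV`, write `B = a U + b V + c A` with `a + b + c = 1`, so `c > 0`.
If `a, b ≥ 0` then `B ∈ UVA`; if `a, b < 0` then `A ∈ UVB`; if exactly one of them is negative,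
a side of `UVB` through `U` or `V` crosses or overlaps a side of `UVA`. Nesting is transitive,
so among three pairwise nested triangles one contains the other two.
-/

noncomputable def triDet (A B C : EuclideanSpace ℝ (Fin 2)) : ℝ :=
  (B 0 - A 0) * (C 1 - A 1) - (B 1 - A 1) * (C 0 - A 0)

section Module

variable {E : Type*} [AddCommGroup E] [Module ℝ E]

lemma smul_add_smul_add_smul_mem_convexHull {U V A : E} {a b c : ℝ}
    (ha : 0 ≤ a) (hb : 0 ≤ b) (hc : 0 ≤ c) (hsum : a + b + c = 1) :
    a • U + b • V + c • A ∈ convexHull ℝ ({U, V, A} : Set E) := by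
  have h := (convex_convexHull ℝ ({U, V, A} : Set E)).sum_mem (t := Finset.univ)
    (w := ![a, b, c]) (z := ![U, V, A])
    (by intro i _; fin_cases i <;> assumption)
    (by simpa [Fin.sum_univ_three] using hsum)
    (by intro i _; fin_cases i <;> exact subset_convexHull ℝ _ (by simp))
  simpa [Fin.sum_univ_three] using h

lemma convexHull_triple_subset_of_mem {U V A B : E}
    (h : A ∈ convexHull ℝ ({U, V, B} : Set E)) :
    convexHull ℝ ({U, V, A} : Set E) ⊆ convexHull ℝ ({U, V, B} : Set E) :=
  convexHull_min (Set.insert_subset_iff.2 ⟨subset_convexHull ℝ _ (by simp),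
    Set.insert_subset_iff.2 ⟨subset_convexHull ℝ _ (by simp), Set.singleton_subset_iff.2 h⟩⟩)
    (convex_convexHull ℝ _)

lemma openSegment_inter_nonempty_of_nonneg_of_neg {U V A B : E} {a b c : ℝ}
    (ha : 0 ≤ a) (hb : b < 0) (hc : 0 < c) (hsum : a + b + c = 1)
    (hB : B = a • U + b • V + c • A) :
    (openSegment ℝ U A ∩ openSegment ℝ V B).Nonempty ∨
      (openSegment ℝ V A ∩ openSegment ℝ V B).Nonempty := by
  have hb1 : 0 < 1 - b := by linarith
  set s := (1 - b)⁻¹ with hs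
  have hs0 : 0 < s := inv_pos.2 hb1
  have hs1 : s < 1 := inv_lt_one_of_one_lt₀ (by linarith)
  -- `(1 - s) • V + s • B = (s * a) • U + (s * c) • A` lies on `UA` since `s * (a + c) = 1`;
  -- when `a = 0` it is `A` itself, and then `VA ⊆ VB`.
  rcases ha.eq_or_lt with rfl | ha
  · refine Or.inr ⟨(1 / 2 : ℝ) • V + (1 / 2 : ℝ) • A,
      ⟨1 / 2, 1 / 2, by norm_num, by norm_num, by norm_num, rfl⟩,
      ⟨1 - s / 2, s / 2, by linarith, by linarith, by ring, ?_⟩⟩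
    rw [hB, hs]
    match_scalars <;> field_simp <;> linarith
  · refine Or.inl ⟨(1 - s) • V + s • B,
      ⟨s * a, s * c, by positivity, by positivity, ?_, ?_⟩,
      ⟨1 - s, s, by linarith, hs0, by ring, rfl⟩⟩
    · rw [hs]; field_simp; linarith
    · rw [hB, hs]
      match_scalars <;> field_simp
      ring

/-- `c > 0` says that `B` lies on the same side of line `UV` as `A`. -/
lemma mem_convexHull_or_mem_convexHull_of_openSegment_inter_eq_empty {U V A B : E} {a b c : ℝ}
    (hc : 0 < c) (hsum : a + b + c = 1) (hB : B = a • U + b • V + c • A)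
    (hUU : openSegment ℝ U A ∩ openSegment ℝ U B = ∅)
    (hUV : openSegment ℝ U A ∩ openSegment ℝ V B = ∅)
    (hVU : openSegment ℝ V A ∩ openSegment ℝ U B = ∅)
    (hVV : openSegment ℝ V A ∩ openSegment ℝ V B = ∅) :
    B ∈ convexHull ℝ ({U, V, A} : Set E) ∨ A ∈ convexHull ℝ ({U, V, B} : Set E) := by
  rcases le_or_gt 0 a with ha | ha <;> rcases le_or_gt 0 b with hb | hb
  · exact Or.inl (hB ▸ smul_add_smul_add_smul_mem_convexHull ha hb hc.le hsum)
  · rcases openSegment_inter_nonempty_of_nonneg_of_neg ha hb hc hsum hB with h | h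
    · exact absurd hUV h.ne_empty
    · exact absurd hVV h.ne_empty
  · rcases openSegment_inter_nonempty_of_nonneg_of_neg (U := V) (V := U) (A := A) (B := B)
      hb ha hc (by linarith) (by rw [hB, add_comm (a • U)]) with h | h
    · exact absurd hVU h.ne_empty
    · exact absurd hUU h.ne_empty
  · refine Or.inr ?_
    have hA : A = (-a / c) • U + (-b / c) • V + c⁻¹ • B := by
      rw [hB]; match_scalars <;> field_simp <;> ring
    rw [hA]
    exact smul_add_smul_add_smul_mem_convexHull (div_nonneg (by linarith) hc.le)
      (div_nonneg (by linarith) hc.le) (inv_nonneg.2 hc.le)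
      (by field_simp; linarith)

end Module

lemma triDet_add_triDet_add_triDet (U V A B : EuclideanSpace ℝ (Fin 2)) :
    triDet B V A + triDet U B A + triDet U V B = triDet U V A := by
  simp only [triDet]; ring

/-- Cramer's rule: the barycentric coordinates of `B` with respect to `U, V, A`. -/
lemma triDet_smul_eq (U V A B : EuclideanSpace ℝ (Fin 2)) :
    triDet U V A • B = triDet B V A • U + triDet U B A • V + triDet U V B • A := by
  ext i
  fin_cases i <;> simp [triDet] <;> ring

lemma mem_convexHull_or_mem_convexHull_of_triDet_mul_pos {U V A B : EuclideanSpace ℝ (Fin 2)}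
    (hside : 0 < triDet U V A * triDet U V B)
    (hUU : openSegment ℝ U A ∩ openSegment ℝ U B = ∅)
    (hUV : openSegment ℝ U A ∩ openSegment ℝ V B = ∅)
    (hVU : openSegment ℝ V A ∩ openSegment ℝ U B = ∅)
    (hVV : openSegment ℝ V A ∩ openSegment ℝ V B = ∅) :
    B ∈ convexHull ℝ ({U, V, A} : Set (EuclideanSpace ℝ (Fin 2))) ∨
      A ∈ convexHull ℝ ({U, V, B} : Set (EuclideanSpace ℝ (Fin 2))) := by
  set d := triDet U V A
  have hd : d ≠ 0 := left_ne_zero_of_mul hside.ne'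
  refine mem_convexHull_or_mem_convexHull_of_openSegment_inter_eq_empty
    (a := triDet B V A / d) (b := triDet U B A / d) (c := triDet U V B / d)
    ?_ ?_ ?_ hUU hUV hVU hVV
  · rw [show triDet U V B / d = d * triDet U V B / (d * d) by field_simp]
    exact div_pos hside (mul_self_pos.2 hd)
  · rw [← add_div, ← add_div, triDet_add_triDet_add_triDet, div_self hd]
  · rw [div_eq_inv_mul, div_eq_inv_mul, div_eq_inv_mul, mul_smul, mul_smul, mul_smul,
      ← smul_add, ← smul_add, ← triDet_smul_eq, inv_smul_smul₀ hd]

lemma exists_three_mul_pos {ι : Type*} [Fintype ι] (hcard : 4 < Fintype.card ι)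
    {f : ι → ℝ} (hf : ∀ i, f i ≠ 0) :
    ∃ i j k, i ≠ j ∧ i ≠ k ∧ j ≠ k ∧ 0 < f i * f j ∧ 0 < f i * f k ∧ 0 < f j * f k := by
  classical
  obtain ⟨side, hside⟩ := Fintype.exists_lt_card_fiber_of_mul_lt_card
    (f := fun i => decide (0 < f i)) (n := 2) (by simp; omega)
  obtain ⟨i, hi, j, hj, k, hk, hij, hik, hjk⟩ := Finset.two_lt_card.1 hside
  simp only [Finset.mem_filter, Finset.mem_univ, true_and] at hi hj hk
  have mul_pos_of_fiber : ∀ x y, decide (0 < f x) = side → decide (0 < f y) = side →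
      0 < f x * f y := by
    intro x y hx hy
    have hxy : (0 < f x ↔ 0 < f y) := by rw [← decide_eq_decide, hx, hy]
    rcases (hf x).lt_or_gt with h | h
    · exact mul_pos_of_neg_of_neg h (lt_of_le_of_ne (not_lt.1 (mt hxy.2 h.not_gt)) (hf y))
    · exact mul_pos h (hxy.1 h)
  exact ⟨i, j, k, hij, hik, hjk, mul_pos_of_fiber i j hi hj, mul_pos_of_fiber i k hi hk,
    mul_pos_of_fiber j k hj hk⟩

lemma exists_dominant_of_three {α : Type*} {R : α → α → Prop}
    (htrans : ∀ x y z, R x y → R y z → R x z) {a b c : α}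
    (hab : R a b ∨ R b a) (hac : R a c ∨ R c a) (hbc : R b c ∨ R c b) :
    (R a b ∧ R a c) ∨ (R b a ∧ R b c) ∨ (R c a ∧ R c b) := by
  rcases hab with h₁ | h₁ <;> rcases hac with h₂ | h₂ <;> rcases hbc with h₃ | h₃ <;> tauto

theorem stmt_12_general (U V : EuclideanSpace ℝ (Fin 2)) (W : Fin 5 → EuclideanSpace ℝ (Fin 2))
    (hW : ∀ i, triDet U V (W i) ≠ 0)
    (hcross : ∀ i j, i ≠ j →
      (openSegment ℝ U (W i) ∩ openSegment ℝ U (W j) = ∅) ∧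
      (openSegment ℝ U (W i) ∩ openSegment ℝ V (W j) = ∅) ∧
      (openSegment ℝ V (W i) ∩ openSegment ℝ U (W j) = ∅) ∧
      (openSegment ℝ V (W i) ∩ openSegment ℝ V (W j) = ∅)) :
    ∃ i j k : Fin 5, i ≠ j ∧ i ≠ k ∧ j ≠ k ∧
      0 < triDet U V (W i) * triDet U V (W j) ∧
      0 < triDet U V (W i) * triDet U V (W k) ∧
      W j ∈ convexHull ℝ ({U, V, W i} : Set (EuclideanSpace ℝ (Fin 2))) ∧
      W k ∈ convexHull ℝ ({U, V, W i} : Set (EuclideanSpace ℝ (Fin 2))) := by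
  let R : Fin 5 → Fin 5 → Prop := fun x y =>
    W y ∈ convexHull ℝ ({U, V, W x} : Set (EuclideanSpace ℝ (Fin 2)))
  have htrans : ∀ x y z, R x y → R y z → R x z := fun _ _ _ hxy hyz =>
    convexHull_triple_subset_of_mem hxy hyz
  have hnested : ∀ x y, x ≠ y → 0 < triDet U V (W x) * triDet U V (W y) → R x y ∨ R y x :=
    fun x y hxy hside =>
      let ⟨hUU, hUV, hVU, hVV⟩ := hcross x y hxy
      mem_convexHull_or_mem_convexHull_of_triDet_mul_pos hside hUU hUV hVU hVV
  obtain ⟨a, b, c, hab, hac, hbc, pab, pac, pbc⟩ := exists_three_mul_pos (by simp) hW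
  rcases exists_dominant_of_three htrans (hnested a b hab pab) (hnested a c hac pac)
      (hnested b c hbc pbc) with ⟨h₁, h₂⟩ | ⟨h₁, h₂⟩ | ⟨h₁, h₂⟩
  · exact ⟨a, b, c, hab, hac, hbc, pab, pac, h₁, h₂⟩
  · exact ⟨b, a, c, hab.symm, hbc, hac, pab.trans_eq (mul_comm _ _), pbc, h₁, h₂⟩
  · exact ⟨c, a, b, hac.symm, hbc.symm, hab, pac.trans_eq (mul_comm _ _),
      pbc.trans_eq (mul_comm _ _), h₁, h₂⟩

theorem stmt_12 (U V : EuclideanSpace ℝ (Fin 2)) (W : Fin 5 → EuclideanSpace ℝ (Fin 2))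
    (hUV : U ≠ V)
    (hW : ∀ i, triDet U V (W i) ≠ 0)
    (hcross : ∀ i j, i ≠ j →
      (openSegment ℝ U (W i) ∩ openSegment ℝ U (W j) = ∅) ∧
      (openSegment ℝ U (W i) ∩ openSegment ℝ V (W j) = ∅) ∧
      (openSegment ℝ V (W i) ∩ openSegment ℝ U (W j) = ∅) ∧
      (openSegment ℝ V (W i) ∩ openSegment ℝ V (W j) = ∅)) :
    ∃ i j k : Fin 5, i ≠ j ∧ i ≠ k ∧ j ≠ k ∧
      0 < triDet U V (W i) * triDet U V (W j) ∧
      0 < triDet U V (W i) * triDet U V (W k) ∧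
      W j ∈ convexHull ℝ ({U, V, W i} : Set (EuclideanSpace ℝ (Fin 2))) ∧
      W k ∈ convexHull ℝ ({U, V, W i} : Set (EuclideanSpace ℝ (Fin 2))) :=
  stmt_12_general U V W hW hcross
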